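/- Let $p_k, \sigma_k > 0$ for $k = 1, \dots, K$ and suppose estimates $\hat p_k, \hat\sigma_k \ge 0$ satisfy $|\sqrt{\hat p_k}\hat\sigma_k - \sqrt{p_k}\sigma_k| \le \epsilon$ for all $k$, where $\epsilon < \frac{1}{2K}\sum_i \sqrt{p_i}\sigma_i$. Then for $T_k^* = \sqrt{p_k}\sigma_k / \sum_i \sqrt{p_i}\sigma_i$ and $\hat T_k = \sqrt{\hat p_k}\hat\sigma_k / \sum_i \sqrt{\hat p_i}\hat\sigma_i$, we have $|\hat T_k - T_k^*| \le \frac{4K\epsilon}{\sum_i \sqrt{p_i}\sigma_i}$ for every $k$. -/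

import Mathlib

open Finset

/-! If each `b_i` is within `ε` of `a_i ≥ 0`, the sums are within `Kε`. Writing
`b/Ŝ - a/S = ((b - a) S + a (S - Ŝ)) / (Ŝ S)` and using `a ≤ S`, the numerator is at most
`(ε + Kε) S`, while `Kε < S/2` keeps the perturbed total `Ŝ` above `S/2`. -/

theorem abs_sum_sub_sum_le_card_mul {ι : Type*} (s : Finset ι) {a b : ι → ℝ} {ε : ℝ}
    (h : ∀ i ∈ s, |b i - a i| ≤ ε) : |∑ i ∈ s, b i - ∑ i ∈ s, a i| ≤ #s * ε := by
  rw [← sum_sub_distrib]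
  calc |∑ i ∈ s, (b i - a i)| ≤ ∑ i ∈ s, |b i - a i| := abs_sum_le_sum_abs _ _
    _ ≤ #s * ε := by simpa using sum_le_card_nsmul s _ ε h

theorem abs_div_sub_div_le_of_abs_sub_le {a b S Ŝ ε δ : ℝ} (ha : 0 ≤ a) (haS : a ≤ S)
    (hb : |b - a| ≤ ε) (hŜ : |Ŝ - S| ≤ δ) (hδ : 2 * δ < S) :
    |b / Ŝ - a / S| ≤ 2 * (ε + δ) / S := by
  have hS : 0 < S := by linarith [(abs_nonneg _).trans hŜ]
  have hŜS : S / 2 < Ŝ := by linarith [(abs_le.1 hŜ).1]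
  have hŜ0 : 0 < Ŝ := by linarith
  have hnum : |(b - a) * S + a * (S - Ŝ)| ≤ (ε + δ) * S :=
    calc |(b - a) * S + a * (S - Ŝ)| ≤ |b - a| * S + a * |Ŝ - S| :=
          (abs_add_le _ _).trans_eq <| by
            rw [abs_mul, abs_mul, abs_of_pos hS, abs_of_nonneg ha, abs_sub_comm S]
      _ ≤ ε * S + S * δ := by gcongr
      _ = (ε + δ) * S := by ring
  have hsplit : b / Ŝ - a / S = ((b - a) * S + a * (S - Ŝ)) / (Ŝ * S) := by
    field_simp
    ring
  calc |b / Ŝ - a / S| = |(b - a) * S + a * (S - Ŝ)| / (Ŝ * S) := by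
        rw [hsplit, abs_div, abs_of_pos (mul_pos hŜ0 hS)]
    _ ≤ (ε + δ) * S / (Ŝ * S) := by gcongr
    _ = (ε + δ) / Ŝ := by field_simp
    _ ≤ (ε + δ) / (S / 2) := by
        gcongr
        linarith [(abs_nonneg _).trans hb, (abs_nonneg _).trans hŜ]
    _ = 2 * (ε + δ) / S := by field_simp

theorem stmt16_general (K : ℕ) (p σ : Fin K → ℝ) (hσ : ∀ k, 0 < σ k)
    (phat σhat : Fin K → ℝ)
    (ε : ℝ)
    (hclose : ∀ k, |Real.sqrt (phat k) * σhat k - Real.sqrt (p k) * σ k| ≤ ε)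
    (hε : ε < (1 / (2 * K)) * ∑ i, Real.sqrt (p i) * σ i)
    (Tstar That : Fin K → ℝ)
    (hTstar : ∀ k, Tstar k = Real.sqrt (p k) * σ k / ∑ i, Real.sqrt (p i) * σ i)
    (hThat : ∀ k, That k = Real.sqrt (phat k) * σhat k / ∑ i, Real.sqrt (phat i) * σhat i) :
    ∀ k, |That k - Tstar k| ≤ 4 * K * ε / ∑ i, Real.sqrt (p i) * σ i := by
  intro k
  set S := ∑ i, Real.sqrt (p i) * σ i
  have hK : (1 : ℝ) ≤ K := by exact_mod_cast k.pos
  have hε0 : 0 ≤ ε := (abs_nonneg _).trans (hclose k)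
  have hterm : ∀ i, 0 ≤ Real.sqrt (p i) * σ i := fun i =>
    mul_nonneg (Real.sqrt_nonneg _) (hσ i).le
  have hsum := abs_sum_sub_sum_le_card_mul univ fun i _ => hclose i
  rw [card_univ, Fintype.card_fin] at hsum
  have hKε : 2 * (K * ε) < S := by
    rw [one_div, ← div_eq_inv_mul, lt_div_iff₀ (by positivity)] at hε
    linarith
  rw [hThat, hTstar]
  calc _ ≤ 2 * (ε + K * ε) / S :=
        abs_div_sub_div_le_of_abs_sub_le (hterm k)
          (single_le_sum (fun i _ => hterm i) (mem_univ k)) (hclose k) hsum hKε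
    _ ≤ 4 * K * ε / S := div_le_div_of_nonneg_right (by nlinarith) (by nlinarith)

/-- Stability of the normalized optimal allocation: if the plug-in products
`√p̂_k σ̂_k` are uniformly `ε`-close to `√p_k σ_k` with `ε < (∑ᵢ √p_i σ_i)/(2K)`,
then the plug-in allocation fractions satisfy `|T̂_k - T_k*| ≤ 4Kε / ∑ᵢ √p_i σ_i`. -/
theorem stmt16 (K : ℕ) (p σ : Fin K → ℝ) (hp : ∀ k, 0 < p k) (hσ : ∀ k, 0 < σ k)
    (phat σhat : Fin K → ℝ) (hphat : ∀ k, 0 ≤ phat k) (hσhat : ∀ k, 0 ≤ σhat k)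
    (ε : ℝ)
    (hclose : ∀ k, |Real.sqrt (phat k) * σhat k - Real.sqrt (p k) * σ k| ≤ ε)
    (hε : ε < (1 / (2 * K)) * ∑ i, Real.sqrt (p i) * σ i)
    (Tstar That : Fin K → ℝ)
    (hTstar : ∀ k, Tstar k = Real.sqrt (p k) * σ k / ∑ i, Real.sqrt (p i) * σ i)
    (hThat : ∀ k, That k = Real.sqrt (phat k) * σhat k / ∑ i, Real.sqrt (phat i) * σhat i) :
    ∀ k, |That k - Tstar k| ≤ 4 * K * ε / ∑ i, Real.sqrt (p i) * σ i :=
  stmt16_general K p σ hσ phat σhat ε hclose hε Tstar That hTstar hThat
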